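/- Let I ⊆ ℝ be an open interval and G : I → ℝ a C² function with G' ≥ 0 on I. Write p̄ = p/W, q̄ = q/W, ω̄ = ω/W. Then at every point (yG(t), y, t) of the graphical strip S one has the identity 2(p̄·Tq̄ − q̄·Tp̄) + 2ω̄·(q̄·Yp̄ − p̄·Yq̄) + ω̄² = −2G'(t)/W², where all ambient derivatives on ℝ×ℝ×I are evaluated at points of S. -/

import Mathlib

/-!
Write the unit horizontal normal as `(p̄, q̄) = (cos θ, sin θ)`. For any first-order operator
`D`, `p̄ · Dq̄ − q̄ · Dp̄ = Dθ = (p · Dq − q · Dp) / W²`, so both brackets of the identity are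
angular velocities of the normal, computable from the first derivatives of `p` and `q` alone.
On the strip `x = y G(t)` gives `q = −G p`; there the normal does not turn along `X1` or `X2`
(so the `Y`-term vanishes) and `Tθ = −p G' / W²`. Since `ω² = y² G'² = 2 (p − 1) G'`, the
left-hand side is `(−2 p G' + 2 (p − 1) G') / W² = −2 G' / W²`.
-/

noncomputable def pfun (G : ℝ → ℝ) (g : ℝ × ℝ × ℝ) : ℝ :=
  1 + g.2.1 ^ 2 / 2 * deriv G g.2.2

noncomputable def qfun (G : ℝ → ℝ) (g : ℝ × ℝ × ℝ) : ℝ :=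
  -G g.2.2 - g.1 * g.2.1 / 2 * deriv G g.2.2

noncomputable def omfun (G : ℝ → ℝ) (g : ℝ × ℝ × ℝ) : ℝ :=
  -g.2.1 * deriv G g.2.2

noncomputable def Wfun (G : ℝ → ℝ) (g : ℝ × ℝ × ℝ) : ℝ :=
  Real.sqrt (pfun G g ^ 2 + qfun G g ^ 2)

noncomputable def dX (f : ℝ × ℝ × ℝ → ℝ) (g : ℝ × ℝ × ℝ) : ℝ :=
  deriv (fun x => f (x, g.2.1, g.2.2)) g.1

noncomputable def dYc (f : ℝ × ℝ × ℝ → ℝ) (g : ℝ × ℝ × ℝ) : ℝ :=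
  deriv (fun y => f (g.1, y, g.2.2)) g.2.1

noncomputable def dT (f : ℝ × ℝ × ℝ → ℝ) (g : ℝ × ℝ × ℝ) : ℝ :=
  deriv (fun t => f (g.1, g.2.1, t)) g.2.2

noncomputable def X1op (f : ℝ × ℝ × ℝ → ℝ) (g : ℝ × ℝ × ℝ) : ℝ :=
  dX f g - g.2.1 / 2 * dT f g

noncomputable def X2op (f : ℝ × ℝ × ℝ → ℝ) (g : ℝ × ℝ × ℝ) : ℝ :=
  dYc f g + g.1 / 2 * dT f g

noncomputable def Yop (G : ℝ → ℝ) (f : ℝ × ℝ × ℝ → ℝ) (g : ℝ × ℝ × ℝ) : ℝ :=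
  (pfun G g * X1op f g + qfun G g * X2op f g) / Wfun G g

theorem hasDerivAt_div_sqrt_sq_add_sq {P Q : ℝ → ℝ} {x p' q' : ℝ} (hP : HasDerivAt P p' x)
    (hQ : HasDerivAt Q q' x) (h0 : P x ^ 2 + Q x ^ 2 ≠ 0) :
    HasDerivAt (fun s => P s / √(P s ^ 2 + Q s ^ 2))
      (Q x * (Q x * p' - P x * q') / √(P x ^ 2 + Q x ^ 2) ^ 3) x := by
  have hpos : 0 < P x ^ 2 + Q x ^ 2 := lt_of_le_of_ne (by positivity) h0.symm
  have hsq : √(P x ^ 2 + Q x ^ 2) ^ 2 = P x ^ 2 + Q x ^ 2 := Real.sq_sqrt hpos.le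
  have hsum : HasDerivAt (fun s => P s ^ 2 + Q s ^ 2) (2 * P x * p' + 2 * Q x * q') x :=
    ((hP.pow 2).add (hQ.pow 2)).congr_deriv (by push_cast; ring)
  refine (hP.div (hsum.sqrt h0) (Real.sqrt_pos.2 hpos).ne').congr_deriv ?_
  field_simp
  linear_combination p' * hsq

theorem wronskian_div_sqrt_sq_add_sq {P Q : ℝ → ℝ} {x p' q' : ℝ} (hP : HasDerivAt P p' x)
    (hQ : HasDerivAt Q q' x) (h0 : P x ^ 2 + Q x ^ 2 ≠ 0) :
    P x / √(P x ^ 2 + Q x ^ 2) * deriv (fun s => Q s / √(P s ^ 2 + Q s ^ 2)) x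
      - Q x / √(P x ^ 2 + Q x ^ 2) * deriv (fun s => P s / √(P s ^ 2 + Q s ^ 2)) x
      = (P x * q' - Q x * p') / (P x ^ 2 + Q x ^ 2) := by
  have hQP : HasDerivAt (fun s => Q s / √(P s ^ 2 + Q s ^ 2))
      (P x * (P x * q' - Q x * p') / √(P x ^ 2 + Q x ^ 2) ^ 3) x := by
    simpa only [add_comm (Q _ ^ 2)] using
      hasDerivAt_div_sqrt_sq_add_sq hQ hP (by rwa [add_comm])
  have hsq : √(P x ^ 2 + Q x ^ 2) ^ 2 = P x ^ 2 + Q x ^ 2 :=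
    Real.sq_sqrt (by positivity)
  rw [hQP.deriv, (hasDerivAt_div_sqrt_sq_add_sq hP hQ h0).deriv]
  field_simp
  linear_combination
    (Q x * p' - P x * q') * (√(P x ^ 2 + Q x ^ 2) ^ 2 + (P x ^ 2 + Q x ^ 2)) * hsq

/-- The angular velocity of the unit horizontal normal `(p̄, q̄)` along the operator `D`. -/
noncomputable def normalRotation (G : ℝ → ℝ) (D : (ℝ × ℝ × ℝ → ℝ) → ℝ × ℝ × ℝ → ℝ)
    (g : ℝ × ℝ × ℝ) : ℝ :=
  pfun G g / Wfun G g * D (fun g' => qfun G g' / Wfun G g') g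
    - qfun G g / Wfun G g * D (fun g' => pfun G g' / Wfun G g') g

theorem normalRotation_Yop (G : ℝ → ℝ) (g : ℝ × ℝ × ℝ) :
    normalRotation G (Yop G) g
      = (pfun G g * (normalRotation G dX g - g.2.1 / 2 * normalRotation G dT g)
          + qfun G g * (normalRotation G dYc g + g.1 / 2 * normalRotation G dT g))
        / Wfun G g := by
  simp only [normalRotation, Yop, X1op, X2op]
  ring

section Derivatives

variable (G : ℝ → ℝ) (x y t : ℝ)

theorem hasDerivAt_pfun_t (hG₂ : DifferentiableAt ℝ (deriv G) t) :
    HasDerivAt (fun s => pfun G (x, y, s)) (y ^ 2 / 2 * deriv (deriv G) t) t := by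
  simp only [pfun]
  exact (hG₂.hasDerivAt.const_mul _).const_add 1

theorem hasDerivAt_qfun_t (hG₁ : DifferentiableAt ℝ G t)
    (hG₂ : DifferentiableAt ℝ (deriv G) t) :
    HasDerivAt (fun s => qfun G (x, y, s)) (-deriv G t - x * y / 2 * deriv (deriv G) t) t := by
  simp only [qfun]
  exact hG₁.hasDerivAt.neg.sub (hG₂.hasDerivAt.const_mul _)

theorem hasDerivAt_pfun_x : HasDerivAt (fun s => pfun G (s, y, t)) 0 x := by
  simp only [pfun]
  exact hasDerivAt_const _ _

theorem hasDerivAt_qfun_x :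
    HasDerivAt (fun s => qfun G (s, y, t)) (-(y / 2 * deriv G t)) x := by
  simp only [qfun]
  exact ((hasDerivAt_const _ _).sub
    ((((hasDerivAt_id x).mul_const y).div_const 2).mul_const _)).congr_deriv (by ring)

theorem hasDerivAt_pfun_y :
    HasDerivAt (fun s => pfun G (x, s, t)) (y * deriv G t) y := by
  simp only [pfun]
  exact ((((hasDerivAt_pow 2 y).div_const 2).mul_const _).const_add 1).congr_deriv
    (by push_cast; ring)

theorem hasDerivAt_qfun_y :
    HasDerivAt (fun s => qfun G (x, s, t)) (-(x / 2 * deriv G t)) y := by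
  simp only [qfun]
  exact ((hasDerivAt_const _ _).sub
    ((((hasDerivAt_id y).const_mul x).div_const 2).mul_const _)).congr_deriv (by ring)

end Derivatives

section Rotation

variable {G : ℝ → ℝ} {x y t : ℝ}

theorem normalRotation_dT (hG₁ : DifferentiableAt ℝ G t) (hG₂ : DifferentiableAt ℝ (deriv G) t)
    (hW : pfun G (x, y, t) ^ 2 + qfun G (x, y, t) ^ 2 ≠ 0) :
    normalRotation G dT (x, y, t)
      = (pfun G (x, y, t) * (-deriv G t - x * y / 2 * deriv (deriv G) t)
          - qfun G (x, y, t) * (y ^ 2 / 2 * deriv (deriv G) t))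
        / (pfun G (x, y, t) ^ 2 + qfun G (x, y, t) ^ 2) :=
  wronskian_div_sqrt_sq_add_sq (hasDerivAt_pfun_t G x y t hG₂)
    (hasDerivAt_qfun_t G x y t hG₁ hG₂) hW

theorem normalRotation_dX (hW : pfun G (x, y, t) ^ 2 + qfun G (x, y, t) ^ 2 ≠ 0) :
    normalRotation G dX (x, y, t)
      = -(pfun G (x, y, t) * (y / 2 * deriv G t))
        / (pfun G (x, y, t) ^ 2 + qfun G (x, y, t) ^ 2) :=
  (wronskian_div_sqrt_sq_add_sq (hasDerivAt_pfun_x G x y t) (hasDerivAt_qfun_x G x y t) hW).trans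
    (by ring)

theorem normalRotation_dYc (hW : pfun G (x, y, t) ^ 2 + qfun G (x, y, t) ^ 2 ≠ 0) :
    normalRotation G dYc (x, y, t)
      = (pfun G (x, y, t) * -(x / 2 * deriv G t) - qfun G (x, y, t) * (y * deriv G t))
        / (pfun G (x, y, t) ^ 2 + qfun G (x, y, t) ^ 2) :=
  wronskian_div_sqrt_sq_add_sq (hasDerivAt_pfun_y G x y t) (hasDerivAt_qfun_y G x y t) hW

end Rotation

theorem one_le_pfun {G : ℝ → ℝ} {g : ℝ × ℝ × ℝ} (hG : 0 ≤ deriv G g.2.2) : 1 ≤ pfun G g :=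
  le_add_of_nonneg_right (by positivity)

section Strip

variable {G : ℝ → ℝ} {y t : ℝ}

theorem normalRotation_dT_of_mem_strip (hG₁ : DifferentiableAt ℝ G t)
    (hG₂ : DifferentiableAt ℝ (deriv G) t)
    (hW : pfun G (y * G t, y, t) ^ 2 + qfun G (y * G t, y, t) ^ 2 ≠ 0) :
    normalRotation G dT (y * G t, y, t)
      = -(pfun G (y * G t, y, t) * deriv G t)
        / (pfun G (y * G t, y, t) ^ 2 + qfun G (y * G t, y, t) ^ 2) := by
  rw [normalRotation_dT hG₁ hG₂ hW]
  congr 1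
  simp only [pfun, qfun]
  ring

theorem normalRotation_Yop_of_mem_strip (hG₁ : DifferentiableAt ℝ G t)
    (hG₂ : DifferentiableAt ℝ (deriv G) t)
    (hW : pfun G (y * G t, y, t) ^ 2 + qfun G (y * G t, y, t) ^ 2 ≠ 0) :
    normalRotation G (Yop G) (y * G t, y, t) = 0 := by
  rw [normalRotation_Yop, normalRotation_dX hW, normalRotation_dYc hW,
    normalRotation_dT_of_mem_strip hG₁ hG₂ hW]
  simp only [pfun, qfun] at hW ⊢
  field_simp
  ring

end Strip

theorem stmt7_general (I : Set ℝ) (hIo : IsOpen I)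
    (G : ℝ → ℝ) (hG : ContDiffOn ℝ 2 G I) (hG' : ∀ t ∈ I, 0 ≤ deriv G t) :
    ∀ y : ℝ, ∀ t ∈ I, ∀ g : ℝ × ℝ × ℝ, g = (y * G t, y, t) →
      2 * ((pfun G g / Wfun G g) * dT (fun g' => qfun G g' / Wfun G g') g
            - (qfun G g / Wfun G g) * dT (fun g' => pfun G g' / Wfun G g') g)
        + 2 * (omfun G g / Wfun G g)
            * ((qfun G g / Wfun G g) * Yop G (fun g' => pfun G g' / Wfun G g') g
                - (pfun G g / Wfun G g) * Yop G (fun g' => qfun G g' / Wfun G g') g)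
        + (omfun G g / Wfun G g) ^ 2
      = -2 * deriv G t / Wfun G g ^ 2 := by
  rintro y t ht g rfl
  have hG₁ : DifferentiableAt ℝ G t :=
    (hG.contDiffAt (hIo.mem_nhds ht)).differentiableAt (by norm_num)
  have hG₂ : DifferentiableAt ℝ (deriv G) t :=
    ((hG.deriv_of_isOpen hIo (by norm_num)).contDiffAt (hIo.mem_nhds ht)).differentiableAt
      one_ne_zero
  have hp : 1 ≤ pfun G (y * G t, y, t) := one_le_pfun (hG' t ht)
  have hW : 0 < pfun G (y * G t, y, t) ^ 2 + qfun G (y * G t, y, t) ^ 2 := by positivity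
  have hT := normalRotation_dT_of_mem_strip hG₁ hG₂ hW.ne'
  have hY := normalRotation_Yop_of_mem_strip hG₁ hG₂ hW.ne'
  have hsq : Wfun G (y * G t, y, t) ^ 2 = _ := Real.sq_sqrt hW.le
  unfold normalRotation at hT hY
  rw [hT, sub_eq_zero.mp hY, sub_self, mul_zero, add_zero, div_pow, hsq]
  have hω : omfun G (y * G t, y, t) ^ 2 = 2 * (pfun G (y * G t, y, t) - 1) * deriv G t := by
    simp only [omfun, pfun]
    ring
  field_simp
  linear_combination hω

/-- With `p̄ = p/W`, `q̄ = q/W`, `ω̄ = ω/W`, at every point `(yG(t), y, t)` of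
the graphical strip one has
`2(p̄·Tq̄ − q̄·Tp̄) + 2ω̄·(q̄·Yp̄ − p̄·Yq̄) + ω̄² = −2G'(t)/W²`. -/
theorem stmt7 (I : Set ℝ) (hIo : IsOpen I) (hIc : I.OrdConnected)
    (G : ℝ → ℝ) (hG : ContDiffOn ℝ 2 G I) (hG' : ∀ t ∈ I, 0 ≤ deriv G t) :
    ∀ y : ℝ, ∀ t ∈ I, ∀ g : ℝ × ℝ × ℝ, g = (y * G t, y, t) →
      2 * ((pfun G g / Wfun G g) * dT (fun g' => qfun G g' / Wfun G g') g
            - (qfun G g / Wfun G g) * dT (fun g' => pfun G g' / Wfun G g') g)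
        + 2 * (omfun G g / Wfun G g)
            * ((qfun G g / Wfun G g) * Yop G (fun g' => pfun G g' / Wfun G g') g
                - (pfun G g / Wfun G g) * Yop G (fun g' => qfun G g' / Wfun G g') g)
        + (omfun G g / Wfun G g) ^ 2
      = -2 * deriv G t / Wfun G g ^ 2 :=
  stmt7_general I hIo G hG hG'
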